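/- arXiv:2506.10809 — 2 statements merged into one kernel-verified Lean document; each statement's English description precedes it below -/
import Mathlib

section
/- Let K ≤ 0 be a real number and let f: ℝ → ℝ be C² with f(t) > 0 and f''(t) + K f(t) ≤ 0 for all t ∈ ℝ. Then sup over t ∈ ℝ of (f'(t)² + K f(t)²) equals K · (inf over t ∈ ℝ of f(t))². -/
/-!
Along a solution the energy `E = (f')² + K f²` has `E' = 2 f' (f'' + K f)`, so it is nondecreasing
wherever `f' ≤ 0`. If `E(t₀) > M ≥ sup K f²` with `f'(t₀) < 0`, then `f'` cannot vanish after `t₀`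
(at a zero `E = K f² ≤ M`), so `E ≥ E(t₀)` forces `(f')² ≥ E(t₀) - M > 0` on `[t₀, ∞)` and the
positive function `f` would decrease at a uniform rate. Reflecting `t ↦ -t` handles `f'(t₀) > 0`.
Hence `sup E ≤ K (inf f)²`, and the reverse inequality holds because `E ≥ K f²`.
-/

open Set

lemma ContinuousOn.exists_first_zero {g : ℝ → ℝ} {a b : ℝ} (hab : a ≤ b)
    (hg : ContinuousOn g (Icc a b)) (ha : g a < 0) (hb : 0 ≤ g b) :
    ∃ c ∈ Ioc a b, g c = 0 ∧ ∀ s ∈ Ico a c, g s < 0 := by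
  set Z := Icc a b ∩ g ⁻¹' {0}
  have hZ : IsCompact Z := isCompact_Icc.of_isClosed_subset
    (hg.preimage_isClosed_of_isClosed isClosed_Icc isClosed_singleton) inter_subset_left
  obtain ⟨c, hcab, hc⟩ := intermediate_value_Icc hab hg ⟨ha.le, hb⟩
  obtain ⟨c, ⟨hcab, hc⟩, hleast⟩ := hZ.exists_isLeast ⟨c, hcab, hc⟩
  have hac : a < c := hcab.1.lt_of_ne (by rintro rfl; exact ha.ne hc)
  refine ⟨c, ⟨hac, hcab.2⟩, hc, fun s hs => ?_⟩
  by_contra! hgs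
  obtain ⟨z, hz, hgz⟩ := intermediate_value_Icc hs.1 (hg.mono (Icc_subset_Icc le_rfl
    (hs.2.le.trans hcab.2))) ⟨ha.le, hgs⟩
  have := hleast ⟨⟨hz.1, hz.2.trans (hs.2.le.trans hcab.2)⟩, hgz⟩
  linarith [hz.2, hs.2]

lemma exists_neg_lt_deriv_of_pos {f : ℝ → ℝ} (hf : Differentiable ℝ f) (hpos : ∀ t, 0 < f t)
    {c : ℝ} (hc : 0 < c) (t₀ : ℝ) : ∃ t, t₀ ≤ t ∧ -c < deriv f t := by
  have hlen : 0 < f t₀ / c := div_pos (hpos t₀) hc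
  obtain ⟨t, ht, hslope⟩ := exists_deriv_eq_slope f (lt_add_of_pos_right t₀ hlen)
    hf.continuous.continuousOn hf.differentiableOn
  refine ⟨t, ht.1.le, ?_⟩
  rw [hslope, add_sub_cancel_left, lt_div_iff₀ hlen, neg_mul, mul_div_cancel₀ _ hc.ne']
  linarith [hpos (t₀ + f t₀ / c)]

noncomputable def energy (K : ℝ) (f : ℝ → ℝ) (t : ℝ) : ℝ := deriv f t ^ 2 + K * f t ^ 2

section Energy

variable {K : ℝ} {f : ℝ → ℝ}

lemma hasDerivAt_energy {t : ℝ} (hf : DifferentiableAt ℝ f t)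
    (hf' : DifferentiableAt ℝ (deriv f) t) :
    HasDerivAt (energy K f) (2 * deriv f t * (deriv (deriv f) t + K * f t)) t := by
  refine ((hf'.hasDerivAt.fun_pow 2).fun_add
    ((hf.hasDerivAt.fun_pow 2).const_mul K)).congr_deriv ?_
  norm_num
  ring

lemma monotoneOn_energy {D : Set ℝ} (hD : Convex ℝ D) (hf : Differentiable ℝ f)
    (hf' : Differentiable ℝ (deriv f)) (hineq : ∀ t ∈ D, deriv (deriv f) t + K * f t ≤ 0)
    (hderiv : ∀ t ∈ D, deriv f t ≤ 0) : MonotoneOn (energy K f) D := by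
  have hE : ∀ t, HasDerivAt (energy K f) _ t := fun t => hasDerivAt_energy (hf t) (hf' t)
  refine monotoneOn_of_deriv_nonneg hD (fun t _ => (hE t).continuousAt.continuousWithinAt)
    (fun t _ => (hE t).differentiableAt.differentiableWithinAt) fun t ht => ?_
  rw [(hE t).deriv]
  have ht := interior_subset ht
  nlinarith [hderiv t ht, hineq t ht]

lemma deriv_comp_neg_eq : deriv (fun s => f (-s)) = fun s => -deriv f (-s) :=
  funext (deriv_comp_neg f)

lemma energy_comp_neg (t : ℝ) : energy K (fun s => f (-s)) t = energy K f (-t) := by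
  simp only [energy, deriv_comp_neg, neg_sq]

lemma deriv_deriv_comp_neg (t : ℝ) :
    deriv (deriv fun s => f (-s)) t = deriv (deriv f) (-t) := by
  rw [deriv_comp_neg_eq, deriv.fun_neg, deriv_comp_neg (deriv f), neg_neg]

lemma deriv_neg_of_lt_energy {M t₀ : ℝ} (hf : Differentiable ℝ f)
    (hf' : Differentiable ℝ (deriv f)) (hineq : ∀ t, deriv (deriv f) t + K * f t ≤ 0)
    (hM : ∀ t, K * f t ^ 2 ≤ M) (ht₀ : deriv f t₀ < 0) (hE : M < energy K f t₀) :
    ∀ t, t₀ ≤ t → deriv f t < 0 := by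
  intro t ht
  by_contra! h
  obtain ⟨c, hc, hc0, hneg⟩ := hf'.continuous.continuousOn.exists_first_zero ht ht₀ h
  have hderiv : ∀ s ∈ Icc t₀ c, deriv f s ≤ 0 := fun s hs =>
    hs.2.lt_or_eq.elim (fun hsc => (hneg s ⟨hs.1, hsc⟩).le) fun hsc => (hsc ▸ hc0).le
  have hmono := monotoneOn_energy (convex_Icc t₀ c) hf hf' (fun s _ => hineq s) hderiv
    (left_mem_Icc.2 hc.1.le) (right_mem_Icc.2 hc.1.le) hc.1.le
  have hEc : energy K f c = K * f c ^ 2 := by simp [energy, hc0]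
  linarith [hM c]

lemma energy_le_of_deriv_neg {M t₀ : ℝ} (hf : Differentiable ℝ f)
    (hf' : Differentiable ℝ (deriv f)) (hpos : ∀ t, 0 < f t)
    (hineq : ∀ t, deriv (deriv f) t + K * f t ≤ 0) (hM : ∀ t, K * f t ^ 2 ≤ M)
    (ht₀ : deriv f t₀ < 0) : energy K f t₀ ≤ M := by
  by_contra! hE
  have hneg := deriv_neg_of_lt_energy hf hf' hineq hM ht₀ hE
  set δ := energy K f t₀ - M
  have hδ : 0 < δ := sub_pos.2 hE
  obtain ⟨t, ht, hslow⟩ := exists_neg_lt_deriv_of_pos hf hpos (Real.sqrt_pos.2 hδ) t₀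
  have hmono := monotoneOn_energy (convex_Ici t₀) hf hf' (fun s _ => hineq s)
    (fun s hs => (hneg s hs).le) self_mem_Ici ht ht
  have hsq : deriv f t ^ 2 < δ := by
    nlinarith [Real.sq_sqrt hδ.le, hneg t ht]
  have : energy K f t < energy K f t₀ := calc
    energy K f t = deriv f t ^ 2 + K * f t ^ 2 := rfl
    _ < δ + M := add_lt_add_of_lt_of_le hsq (hM t)
    _ = energy K f t₀ := sub_add_cancel _ _
  exact this.not_ge hmono

theorem energy_le_of_forall_mul_sq_le {M : ℝ} (hf : Differentiable ℝ f)
    (hf' : Differentiable ℝ (deriv f)) (hpos : ∀ t, 0 < f t)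
    (hineq : ∀ t, deriv (deriv f) t + K * f t ≤ 0) (hM : ∀ t, K * f t ^ 2 ≤ M) (t : ℝ) :
    energy K f t ≤ M := by
  rcases lt_trichotomy (deriv f t) 0 with h | h | h
  · exact energy_le_of_deriv_neg hf hf' hpos hineq hM h
  · simpa [energy, h] using hM t
  · have hf_neg : Differentiable ℝ fun s => f (-s) := hf.comp differentiable_neg
    have hf'_neg : Differentiable ℝ (deriv fun s => f (-s)) := by
      rw [deriv_comp_neg_eq]
      exact (hf'.comp differentiable_neg).neg
    rw [← neg_neg t, ← energy_comp_neg]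
    refine energy_le_of_deriv_neg hf_neg hf'_neg (fun s => hpos (-s)) (fun s => ?_)
      (fun s => hM (-s)) ?_
    · rw [deriv_deriv_comp_neg]
      exact hineq (-s)
    · rwa [deriv_comp_neg, neg_neg, neg_lt_zero]

end Energy

/-- For `K ≤ 0` and a positive `C²` solution of `f'' + K f ≤ 0` on `ℝ`, the supremum of
`(f')² + K f²` equals `K` times the square of the infimum of `f`. -/
theorem statement_4 (K : ℝ) (hK : K ≤ 0) (f : ℝ → ℝ) (hf : ContDiff ℝ 2 f)
    (hpos : ∀ t, 0 < f t)
    (hineq : ∀ t, deriv (deriv f) t + K * f t ≤ 0) :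
    sSup (Set.range fun t => deriv f t ^ 2 + K * f t ^ 2)
      = K * (sInf (Set.range f)) ^ 2 := by
  set m := sInf (range f)
  have hbdd : BddBelow (range f) := ⟨0, forall_mem_range.2 fun t => (hpos t).le⟩
  have hm : 0 ≤ m := le_csInf (range_nonempty f) (forall_mem_range.2 fun t => (hpos t).le)
  have hM : ∀ t, K * f t ^ 2 ≤ K * m ^ 2 := fun t =>
    mul_le_mul_of_nonpos_left (pow_le_pow_left₀ hm (csInf_le hbdd (mem_range_self t)) 2) hK
  have hE : ∀ t, energy K f t ≤ K * m ^ 2 := energy_le_of_forall_mul_sq_le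
    (hf.differentiable two_ne_zero) hf.differentiable_deriv_two hpos hineq hM
  change sSup (range (energy K f)) = _
  refine le_antisymm (csSup_le (range_nonempty _) (forall_mem_range.2 hE)) ?_
  obtain ⟨u, -, hu, hmem⟩ := exists_seq_tendsto_sInf (range_nonempty f) hbdd
  refine le_of_tendsto' ((hu.pow 2).const_mul K) fun n => ?_
  obtain ⟨t, ht⟩ := hmem n
  calc K * u n ^ 2 = K * f t ^ 2 := by rw [ht]
    _ ≤ energy K f t := le_add_of_nonneg_left (sq_nonneg _)
    _ ≤ sSup (range (energy K f)) := le_csSup ⟨_, forall_mem_range.2 hE⟩ (mem_range_self t)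
end

section
/- Let K < 0 and let f: [a,b] → ℝ be a Lipschitz function with f ≥ 0. Then the following are equivalent: (i) f satisfies f'' + K f ≤ 0 in the distributional sense on (a,b); (ii) for all t₀, t₁ ∈ [a,b] with t₀ ≠ t₁ and all s ∈ [0,1], f((1−s)t₀ + s t₁) ≥ (sinh((1−s)√(−K)·|t₁−t₀|)/sinh(√(−K)·|t₁−t₀|))·f(t₀) + (sinh(s√(−K)·|t₁−t₀|)/sinh(√(−K)·|t₁−t₀|))·f(t₁). -/
/-!
Write `α = √(-K)`. The σ-coefficients are those of `sinhInterp α t₀ t₁ (f t₀) (f t₁)`, the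
solution of `u'' = α² u` taking the values of `f` at `t₀` and `t₁`, so (ii) says that `f` lies
above every such interpolant.

(i) ⇒ (ii): the mollifications of `f` satisfy `g'' + K g ≤ 0` classically on compact
subintervals of `(a, b)`. As `K < 0`, a negative interior minimum of `g - u` is impossible
(there `(g - u)'' ≥ 0 > -K (g - u)`), so each mollification lies above its interpolant. Letting
the mollifier shrink, and then the subinterval grow to `[a, b]`, uses only continuity of `f`.

(ii) ⇒ (i): at `s = 1/2` the inequality reads `f (x - h) + f (x + h) ≤ 2 cosh (α h) f x`.
Pairing it with a test function `φ ≥ 0` and translating, the integral of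
`f (φ (t + h) + φ (t - h) - 2 cosh (α h) φ t) / h²` is `≤ 0`; as `h → 0⁺` the integrand
converges boundedly to `f (φ'' + K φ)`.
-/

open MeasureTheory Real Set Filter Topology Function
open scoped Convolution

theorem IsLocalMin.deriv_deriv_nonneg {f : ℝ → ℝ} {x : ℝ} (h : IsLocalMin f x)
    (hc : ContinuousAt f x) : 0 ≤ deriv (deriv f) x := by
  by_contra! hneg
  have hmax := isLocalMax_of_deriv_deriv_neg hneg h.deriv_eq_zero hc
  have hconst : f =ᶠ[𝓝 x] fun _ => f x := by
    filter_upwards [h, hmax] with y h₁ h₂ using le_antisymm h₂ h₁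
  have : deriv f =ᶠ[𝓝 x] fun _ => 0 := by
    filter_upwards [hconst.eventuallyEq_nhds] with y hy
    rw [hy.deriv_eq, deriv_const]
  simp [this.deriv_eq] at hneg

theorem nonneg_of_deriv_deriv_add_mul_nonpos {K : ℝ} (hK : K < 0) {g : ℝ → ℝ}
    (hg : Continuous g) {c d : ℝ} (hsup : ∀ t ∈ Ioo c d, deriv (deriv g) t + K * g t ≤ 0)
    (hc : 0 ≤ g c) (hd : 0 ≤ g d) : ∀ t ∈ Icc c d, 0 ≤ g t := by
  intro t ht
  obtain ⟨t₀, ht₀, hmin⟩ := isCompact_Icc.exists_isMinOn ⟨t, ht⟩ hg.continuousOn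
  refine le_trans ?_ (hmin ht)
  by_contra! hneg
  have ht₀' : t₀ ∈ Ioo c d :=
    ⟨ht₀.1.lt_of_ne (by rintro rfl; linarith), ht₀.2.lt_of_ne (by rintro rfl; linarith)⟩
  have := (hmin.isLocalMin (Icc_mem_nhds ht₀'.1 ht₀'.2)).deriv_deriv_nonneg hg.continuousAt
  nlinarith [hsup t₀ ht₀']

theorem le_of_deriv_deriv_add_mul_nonpos {K : ℝ} (hK : K < 0) {g u : ℝ → ℝ}
    (hg : ContDiff ℝ 2 g) (hu : ContDiff ℝ 2 u) {c d : ℝ}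
    (hsup : ∀ t ∈ Ioo c d, deriv (deriv g) t + K * g t ≤ deriv (deriv u) t + K * u t)
    (hc : u c ≤ g c) (hd : u d ≤ g d) : ∀ t ∈ Icc c d, u t ≤ g t := by
  have hdiff : deriv (deriv (g - u)) = deriv (deriv g) - deriv (deriv u) := by
    have : deriv (g - u) = deriv g - deriv u := by
      ext t; exact deriv_sub (hg.differentiable two_ne_zero t) (hu.differentiable two_ne_zero t)
    ext t
    rw [this]
    exact deriv_sub (hg.differentiable_deriv_two t) (hu.differentiable_deriv_two t)
  intro t ht
  refine sub_nonneg.1 (nonneg_of_deriv_deriv_add_mul_nonpos hK (hg.continuous.sub hu.continuous)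
    (fun t ht => ?_) (sub_nonneg.2 hc) (sub_nonneg.2 hd) t ht)
  simp only [hdiff, Pi.sub_apply]
  linarith [hsup t ht]

noncomputable def sinhInterp (α c d y₀ y₁ t : ℝ) : ℝ :=
  (sinh (α * (d - t)) * y₀ + sinh (α * (t - c)) * y₁) / sinh (α * (d - c))

section sinhInterp

variable {α c d y₀ y₁ : ℝ}

theorem deriv_deriv_sinhInterp (t : ℝ) :
    deriv (deriv (sinhInterp α c d y₀ y₁)) t = α ^ 2 * sinhInterp α c d y₀ y₁ t := by
  have h₀ (t : ℝ) : HasDerivAt (fun t => α * (d - t)) (-α) t := by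
    simpa using ((hasDerivAt_id t).const_sub d).const_mul α
  have h₁ (t : ℝ) : HasDerivAt (fun t => α * (t - c)) α t := by
    simpa using ((hasDerivAt_id t).sub_const c).const_mul α
  have hd : deriv (sinhInterp α c d y₀ y₁) = fun t =>
      (-α * cosh (α * (d - t)) * y₀ + α * cosh (α * (t - c)) * y₁) / sinh (α * (d - c)) := by
    ext t
    refine (((h₀ t).sinh.mul_const y₀).add ((h₁ t).sinh.mul_const y₁)).div_const _ |>.deriv.trans ?_
    ring
  rw [hd]
  refine (((((h₀ t).cosh.const_mul (-α)).mul_const y₀).add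
    (((h₁ t).cosh.const_mul α).mul_const y₁)).div_const _).deriv.trans ?_
  rw [sinhInterp]
  ring

theorem sinhInterp_le_of_deriv_deriv_add_mul_nonpos {K : ℝ} (hK : K < 0) {g : ℝ → ℝ}
    (hg : ContDiff ℝ 2 g) (hcd : c < d)
    (hsup : ∀ t ∈ Ioo c d, deriv (deriv g) t + K * g t ≤ 0) :
    ∀ t ∈ Icc c d, sinhInterp √(-K) c d (g c) (g d) t ≤ g t := by
  have hne : sinh (√(-K) * (d - c)) ≠ 0 :=
    sinh_ne_zero.2 (mul_ne_zero (sqrt_pos.2 (neg_pos.2 hK)).ne' (sub_ne_zero.2 hcd.ne'))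
  refine le_of_deriv_deriv_add_mul_nonpos hK hg (by unfold sinhInterp; fun_prop)
    (fun t ht => ?_) (by simp [sinhInterp, hne]) (by simp [sinhInterp, hne])
  rw [deriv_deriv_sinhInterp, sq_sqrt (neg_nonneg.2 hK.le)]
  linarith [hsup t ht]

theorem sinhInterp_midpoint (x h : ℝ) (hα : α * h ≠ 0) :
    sinhInterp α (x - h) (x + h) y₀ y₁ x = (y₀ + y₁) / (2 * cosh (α * h)) := by
  have : α * (x + h - (x - h)) = 2 * (α * h) := by ring
  rw [sinhInterp, this, sinh_two_mul, add_sub_cancel_left, sub_sub_cancel]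
  have := sinh_ne_zero.2 hα
  have := (cosh_pos (α * h)).ne'
  field_simp

theorem sinhInterp_convexCombo (s : ℝ) :
    sinhInterp α c d y₀ y₁ ((1 - s) * c + s * d) =
      sinh ((1 - s) * (α * (d - c))) / sinh (α * (d - c)) * y₀
        + sinh (s * (α * (d - c))) / sinh (α * (d - c)) * y₁ := by
  rw [sinhInterp, show α * (d - ((1 - s) * c + s * d)) = (1 - s) * (α * (d - c)) by ring,
    show α * ((1 - s) * c + s * d - c) = s * (α * (d - c)) by ring]
  ring

end sinhInterp

theorem Filter.Tendsto.sinhInterp {ι : Type*} {l : Filter ι} {α : ℝ} {c d y₀ y₁ t : ι → ℝ}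
    {c' d' y₀' y₁' t' : ℝ} (hc : Tendsto c l (𝓝 c')) (hd : Tendsto d l (𝓝 d'))
    (hy₀ : Tendsto y₀ l (𝓝 y₀')) (hy₁ : Tendsto y₁ l (𝓝 y₁')) (ht : Tendsto t l (𝓝 t'))
    (hne : sinh (α * (d' - c')) ≠ 0) :
    Tendsto (fun i => _root_.sinhInterp α (c i) (d i) (y₀ i) (y₁ i) (t i)) l
      (𝓝 (_root_.sinhInterp α c' d' y₀' y₁' t')) := by
  have hsinh {u : ι → ℝ} {u' : ℝ} (hu : Tendsto u l (𝓝 u')) :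
      Tendsto (fun i => sinh (α * u i)) l (𝓝 (sinh (α * u'))) :=
    (continuous_sinh.tendsto _).comp (hu.const_mul α)
  exact (((hsinh (hd.sub ht)).mul hy₀).add ((hsinh (ht.sub hc)).mul hy₁)).div
    (hsinh (hd.sub hc)) hne

def SigmaConcaveOn (K : ℝ) (f : ℝ → ℝ) (I : Set ℝ) : Prop :=
  ∀ t₀ ∈ I, ∀ t₁ ∈ I, t₀ ≠ t₁ → ∀ s ∈ Icc (0 : ℝ) 1,
    sinh ((1 - s) * (√(-K) * |t₁ - t₀|)) / sinh (√(-K) * |t₁ - t₀|) * f t₀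
      + sinh (s * (√(-K) * |t₁ - t₀|)) / sinh (√(-K) * |t₁ - t₀|) * f t₁
      ≤ f ((1 - s) * t₀ + s * t₁)

theorem sigmaConcaveOn_iff {K : ℝ} {f : ℝ → ℝ} {I : Set ℝ} :
    SigmaConcaveOn K f I ↔
      ∀ c ∈ I, ∀ d ∈ I, c < d → ∀ t ∈ Icc c d, sinhInterp √(-K) c d (f c) (f d) t ≤ f t := by
  constructor
  · intro h c hc d hd hcd t ht
    have hdc : 0 < d - c := sub_pos.2 hcd
    set s := (t - c) / (d - c)
    have hs : s ∈ Icc (0 : ℝ) 1 :=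
      ⟨div_nonneg (by linarith [ht.1]) hdc.le, div_le_one_of_le₀ (by linarith [ht.2]) hdc.le⟩
    have ht : t = (1 - s) * c + s * d := by simp only [s]; field_simp; ring
    have := h c hc d hd hcd.ne s hs
    rwa [abs_of_pos hdc, ← sinhInterp_convexCombo, ← ht] at this
  · intro h t₀ ht₀ t₁ ht₁ hne s hs
    rcases hne.lt_or_gt with hlt | hlt
    · have hmem : (1 - s) * t₀ + s * t₁ ∈ Icc t₀ t₁ := by
        constructor <;> nlinarith [hs.1, hs.2]
      have := h t₀ ht₀ t₁ ht₁ hlt _ hmem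
      rwa [sinhInterp_convexCombo, ← abs_of_pos (sub_pos.2 hlt)] at this
    · have hp : (1 - s) * t₀ + s * t₁ = (1 - (1 - s)) * t₁ + (1 - s) * t₀ := by ring
      have hmem : (1 - s) * t₀ + s * t₁ ∈ Icc t₁ t₀ := by
        constructor <;> nlinarith [hs.1, hs.2]
      have := h t₁ ht₁ t₀ ht₀ hlt _ hmem
      rw [hp, sinhInterp_convexCombo, sub_sub_cancel, ← abs_of_pos (sub_pos.2 hlt),
        abs_sub_comm] at this
      rw [hp, sub_sub_cancel]
      linarith

def IsWeakSupersolution (K : ℝ) (f : ℝ → ℝ) (a b : ℝ) : Prop :=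
  ∀ φ : ℝ → ℝ, ContDiff ℝ (⊤ : ℕ∞) φ → HasCompactSupport φ → tsupport φ ⊆ Ioo a b →
    (∀ t, 0 ≤ φ t) → ∫ t in Ioo a b, f t * (deriv (deriv φ) t + K * φ t) ≤ 0

theorem integral_indicator_mul {α : Type*} [MeasurableSpace α] {μ : Measure α} {s : Set α}
    (hs : MeasurableSet s) (f g : α → ℝ) :
    ∫ x, s.indicator f x * g x ∂μ = ∫ x in s, f x * g x ∂μ := by
  simp_rw [← indicator_mul_left]
  exact integral_indicator hs

theorem deriv_deriv_convolution {ρ F : ℝ → ℝ} (hρ : ContDiff ℝ 2 ρ) (hρc : HasCompactSupport ρ)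
    (hF : LocallyIntegrable F) : deriv (deriv (ρ ⋆ F)) = deriv (deriv ρ) ⋆ F := by
  have hρ' : ContDiff ℝ 1 (deriv ρ) := (contDiff_succ_iff_deriv.1 hρ).2.2
  have h₁ : deriv (ρ ⋆ F) = deriv ρ ⋆ F :=
    funext fun x => (hρc.hasDerivAt_convolution_left _ (hρ.of_le one_le_two) hF x).deriv
  rw [h₁]
  exact funext fun x => (hρc.deriv.hasDerivAt_convolution_left _ hρ' hF x).deriv

theorem deriv_deriv_comp_const_sub (ρ : ℝ → ℝ) (x : ℝ) :
    deriv (deriv fun y => ρ (x - y)) = fun y => deriv (deriv ρ) (x - y) := by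
  have h₁ : deriv (fun y => ρ (x - y)) = fun y => -deriv ρ (x - y) :=
    funext fun y => deriv_comp_const_sub ..
  ext y
  rw [h₁, deriv.fun_neg, deriv_comp_const_sub, neg_neg]

theorem IsWeakSupersolution.deriv_deriv_convolution_add_mul_nonpos {K a b : ℝ} {f : ℝ → ℝ}
    (hsup : IsWeakSupersolution K f a b) (hf : IntegrableOn f (Ioo a b)) {ρ : ℝ → ℝ}
    (hρ : ContDiff ℝ (⊤ : ℕ∞) ρ) (hρc : HasCompactSupport ρ) (hρ₀ : ∀ y, 0 ≤ ρ y) {x : ℝ}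
    (hx : ∀ y ∈ tsupport ρ, x - y ∈ Ioo a b) :
    deriv (deriv (ρ ⋆ (Ioo a b).indicator f)) x + K * (ρ ⋆ (Ioo a b).indicator f) x ≤ 0 := by
  set F := (Ioo a b).indicator f
  have hF : LocallyIntegrable F := (hf.integrable_indicator measurableSet_Ioo).locallyIntegrable
  have hρ₂ : ContDiff ℝ 2 ρ := hρ.of_le (by norm_cast)
  have hρ₂c : Continuous (deriv (deriv ρ)) :=
    (contDiff_succ_iff_deriv.1 hρ₂).2.2.continuous_deriv le_rfl
  have hψs : tsupport (fun y => ρ (x - y)) ⊆ Ioo a b := fun y hy => by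
    simpa using hx _ (tsupport_comp_subset_preimage ρ (continuous_sub_left x) hy)
  have key := hsup (fun y => ρ (x - y)) (hρ.comp (contDiff_const.sub contDiff_id))
    (hρc.comp_homeomorph (Homeomorph.subLeft x)) hψs fun y => hρ₀ _
  rw [deriv_deriv_comp_const_sub, ← integral_indicator_mul measurableSet_Ioo] at key
  have hρ₂F : ConvolutionExistsAt (deriv (deriv ρ)) F x (ContinuousLinearMap.lsmul ℝ ℝ) :=
    hρc.deriv.deriv.convolutionExists_left _ hρ₂c hF x
  have hKρF : ConvolutionExistsAt (K • ρ) F x (ContinuousLinearMap.lsmul ℝ ℝ) :=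
    hρc.smul_left.convolutionExists_left _ (hρ.continuous.const_smul K) hF x
  calc deriv (deriv (ρ ⋆ F)) x + K * (ρ ⋆ F) x = ((deriv (deriv ρ) + K • ρ) ⋆ F) x := by
        rw [deriv_deriv_convolution hρ₂ hρc hF, hρ₂F.add_distrib hKρF, smul_convolution]
        rfl
    _ = ∫ t, F t * (deriv (deriv ρ) (x - t) + K * ρ (x - t)) := by
        rw [convolution_lsmul_swap]
        simp [mul_comm]
    _ ≤ 0 := key

theorem IsWeakSupersolution.sinhInterp_le {K a b : ℝ} (hK : K < 0) {f : ℝ → ℝ}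
    (hsup : IsWeakSupersolution K f a b) (hf : ContinuousOn f (Icc a b)) {c d : ℝ}
    (hac : a < c) (hcd : c < d) (hdb : d < b) :
    ∀ t ∈ Icc c d, sinhInterp √(-K) c d (f c) (f d) t ≤ f t := by
  set F := (Ioo a b).indicator f
  have hfi : IntegrableOn f (Ioo a b) := hf.integrableOn_Icc.mono_set Ioo_subset_Icc_self
  have hF : Integrable F := hfi.integrable_indicator measurableSet_Ioo
  let φ (n : ℕ) : ContDiffBump (0 : ℝ) :=
    ⟨1 / (n + 2), 1 / (n + 1), by positivity, by gcongr; linarith⟩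
  have hφ : Tendsto (fun n => (φ n).rOut) atTop (𝓝 0) := tendsto_one_div_add_atTop_nhds_zero_nat
  have hlim {x : ℝ} (hx : x ∈ Ioo a b) :
      Tendsto (fun n => ((φ n).normed volume ⋆ F) x) atTop (𝓝 (f x)) := by
    have hFx : ContinuousAt F x := by
      refine (hf.continuousAt (Icc_mem_nhds hx.1 hx.2)).congr ?_
      filter_upwards [isOpen_Ioo.mem_nhds hx] with y hy using (indicator_of_mem hy f).symm
    simpa [F, indicator_of_mem hx] using ContDiffBump.convolution_tendsto_right hφ
      (Eventually.of_forall fun _ => hF.aestronglyMeasurable) (hFx.tendsto.comp tendsto_snd)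
      tendsto_const_nhds
  have hsup' : ∀ᶠ n in atTop, ∀ t ∈ Ioo c d,
      deriv (deriv ((φ n).normed volume ⋆ F)) t + K * ((φ n).normed volume ⋆ F) t ≤ 0 := by
    filter_upwards [hφ.eventually (gt_mem_nhds (lt_min (sub_pos.2 hac) (sub_pos.2 hdb)))]
      with n hn t ht
    refine hsup.deriv_deriv_convolution_add_mul_nonpos hfi (φ n).contDiff_normed
      (φ n).hasCompactSupport_normed (φ n).nonneg_normed fun y hy => ?_
    rw [(φ n).tsupport_normed_eq, Metric.mem_closedBall, dist_zero_right, Real.norm_eq_abs,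
      abs_le] at hy
    constructor <;> linarith [min_le_left (c - a) (b - d), min_le_right (c - a) (b - d), ht.1, ht.2]
  have hmem {x : ℝ} (hx : x ∈ Icc c d) : x ∈ Ioo a b := ⟨hac.trans_le hx.1, hx.2.trans_lt hdb⟩
  intro t ht
  refine le_of_tendsto_of_tendsto (tendsto_const_nhds.sinhInterp tendsto_const_nhds
    (hlim (hmem (left_mem_Icc.2 hcd.le))) (hlim (hmem (right_mem_Icc.2 hcd.le))) tendsto_const_nhds
    (sinh_ne_zero.2 (mul_ne_zero (sqrt_pos.2 (neg_pos.2 hK)).ne' (sub_ne_zero.2 hcd.ne'))))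
    (hlim (hmem ht)) ?_
  filter_upwards [hsup'] with n hn
  exact sinhInterp_le_of_deriv_deriv_add_mul_nonpos hK
    ((φ n).hasCompactSupport_normed.contDiff_convolution_left _ (φ n).contDiff_normed
      hF.locallyIntegrable) hcd hn t ht

theorem sinhInterp_le_of_forall_Ioo {α a b : ℝ} (hα : α ≠ 0) {f : ℝ → ℝ}
    (hf : ContinuousOn f (Icc a b))
    (h : ∀ c d, a < c → c < d → d < b → ∀ t ∈ Icc c d, sinhInterp α c d (f c) (f d) t ≤ f t)
    {c d : ℝ} (hac : a ≤ c) (hcd : c < d) (hdb : d ≤ b) :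
    ∀ t ∈ Icc c d, sinhInterp α c d (f c) (f d) t ≤ f t := by
  intro t ht
  obtain ⟨m, hcm, hmd⟩ : ∃ m, c < m ∧ m < d := ⟨(c + d) / 2, by linarith, by linarith⟩
  have hshrink {x : ℝ} (hx : x ∈ Icc c d) :
      Tendsto (fun s => x + s * (m - x)) (𝓝[>] 0) (𝓝[Icc c d] x) := by
    refine tendsto_nhdsWithin_iff.2 ⟨tendsto_nhdsWithin_of_tendsto_nhds ?_, ?_⟩
    · simpa using ((continuous_id.mul continuous_const).const_add x).tendsto (0 : ℝ)
    · filter_upwards [Ioo_mem_nhdsGT one_pos] with s hs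
      constructor <;> nlinarith [mul_le_mul_of_nonneg_left hx.1 (sub_nonneg.2 hs.2.le),
        mul_le_mul_of_nonneg_left hx.2 (sub_nonneg.2 hs.2.le),
        mul_le_mul_of_nonneg_left hcm.le hs.1.le, mul_le_mul_of_nonneg_left hmd.le hs.1.le]
  have hlim {x : ℝ} (hx : x ∈ Icc c d) :
      Tendsto (fun s => f (x + s * (m - x))) (𝓝[>] 0) (𝓝 (f x)) :=
    (hf x ⟨hac.trans hx.1, hx.2.trans hdb⟩).tendsto.comp
      ((hshrink hx).mono_right (nhdsWithin_mono _ (Icc_subset_Icc hac hdb)))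
  have hlim' {x : ℝ} (hx : x ∈ Icc c d) : Tendsto (fun s => x + s * (m - x)) (𝓝[>] 0) (𝓝 x) :=
    (hshrink hx).mono_right nhdsWithin_le_nhds
  have hc := left_mem_Icc.2 hcd.le
  have hd := right_mem_Icc.2 hcd.le
  refine le_of_tendsto_of_tendsto ((hlim' hc).sinhInterp (hlim' hd) (hlim hc) (hlim hd) (hlim' ht)
    (sinh_ne_zero.2 (mul_ne_zero hα (sub_ne_zero.2 hcd.ne')))) (hlim ht) ?_
  filter_upwards [Ioo_mem_nhdsGT one_pos] with s hs
  have hc' : c < c + s * (m - c) := lt_add_of_pos_right _ (mul_pos hs.1 (by linarith))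
  have hd' : d + s * (m - d) < d := add_lt_of_neg_right _ (mul_neg_of_pos_of_neg hs.1 (by linarith))
  have hmono {x y : ℝ} (hxy : x ≤ y) : x + s * (m - x) ≤ y + s * (m - y) := by
    nlinarith [mul_le_mul_of_nonneg_left hxy (sub_nonneg.2 hs.2.le)]
  exact h _ _ (hac.trans_lt hc') (by nlinarith [mul_lt_mul_of_pos_left hcd (sub_pos.2 hs.2)])
    (hd'.trans_le hdb) _ ⟨hmono ht.1, hmono ht.2⟩

theorem IsWeakSupersolution.sigmaConcaveOn {K a b : ℝ} (hK : K < 0) {f : ℝ → ℝ}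
    (hsup : IsWeakSupersolution K f a b) (hf : ContinuousOn f (Icc a b)) :
    SigmaConcaveOn K f (Icc a b) :=
  sigmaConcaveOn_iff.2 fun _ hc _ hd hcd =>
    sinhInterp_le_of_forall_Ioo (sqrt_pos.2 (neg_pos.2 hK)).ne' hf
      (fun _ _ hac hcd hdb => hsup.sinhInterp_le hK hf hac hcd hdb) hc.1 hcd hd.2

noncomputable def secondDiffQuot (ψ : ℝ → ℝ) (t h : ℝ) : ℝ :=
  (ψ (t + h) + ψ (t - h) - 2 * ψ t) / h ^ 2

section SecondDiff

variable {ψ ψ' ψ'' : ℝ → ℝ} (hψ : ∀ x, HasDerivAt ψ (ψ' x) x)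
  (hψ' : ∀ x, HasDerivAt ψ' (ψ'' x) x)
include hψ hψ'

theorem abs_secondDiffQuot_sub_le {t h ε : ℝ} (hh : 0 < h)
    (hε : ∀ v, |v| ≤ h → |ψ'' (t + v) - ψ'' t| ≤ ε) :
    |secondDiffQuot ψ t h - ψ'' t| ≤ 2 * ε := by
  have hε₀ : 0 ≤ ε := by simpa using hε 0 (by simp [hh.le])
  have hA' : ∀ u ∈ Icc 0 h, |ψ' (t + u) - ψ' (t - u) - 2 * u * ψ'' t| ≤ 2 * ε * h := by
    intro u hu
    have hmvt := norm_image_sub_le_of_norm_deriv_le_segment'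
      (a := t - u) (b := t + u) (f := fun w => ψ' w - w * ψ'' t)
      (f' := fun w => ψ'' w - ψ'' t) (C := ε)
      (fun w _ => ((hψ' w).sub ((hasDerivAt_id w).mul_const _)).hasDerivWithinAt.congr_deriv
        (by simp))
      (fun w hw => by
        simpa using hε (w - t) (abs_le.2 ⟨by linarith [hw.1, hu.2], by linarith [hw.2, hu.2]⟩))
      (t + u) ⟨by linarith [hu.1], le_rfl⟩
    simp only [Real.norm_eq_abs] at hmvt
    calc _ = |ψ' (t + u) - (t + u) * ψ'' t - (ψ' (t - u) - (t - u) * ψ'' t)| := by ring_nf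
      _ ≤ ε * (t + u - (t - u)) := hmvt
      _ ≤ 2 * ε * h := by nlinarith [hu.2]
  have hA := norm_image_sub_le_of_norm_deriv_le_segment'
    (a := 0) (b := h) (f := fun u => ψ (t + u) + ψ (t - u) - 2 * ψ t - u ^ 2 * ψ'' t)
    (f' := fun u => ψ' (t + u) - ψ' (t - u) - 2 * u * ψ'' t) (C := 2 * ε * h)
    (fun u _ => by
      have hplus := (hψ (t + u)).comp u ((hasDerivAt_id u).const_add t)
      have hminus := (hψ (t - u)).comp u ((hasDerivAt_id u).const_sub t)
      exact (((hplus.add hminus).sub_const _).sub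
        ((hasDerivAt_pow 2 u).mul_const _)).hasDerivWithinAt.congr_deriv (by simp; ring))
    (fun u hu => hA' u (Ico_subset_Icc_self hu)) h ⟨hh.le, le_rfl⟩
  have hA0 : ψ (t + 0) + ψ (t - 0) - 2 * ψ t - 0 ^ 2 * ψ'' t = 0 := by ring_nf
  rw [hA0, sub_zero, sub_zero, Real.norm_eq_abs] at hA
  have hquot : secondDiffQuot ψ t h - ψ'' t =
      (ψ (t + h) + ψ (t - h) - 2 * ψ t - h ^ 2 * ψ'' t) / h ^ 2 := by
    rw [secondDiffQuot]; field_simp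
  rw [hquot, abs_div, abs_of_pos (pow_pos hh 2), div_le_iff₀ (pow_pos hh 2)]
  linarith

theorem tendsto_secondDiffQuot {t : ℝ} (hc : ContinuousAt ψ'' t) :
    Tendsto (secondDiffQuot ψ t) (𝓝[>] 0) (𝓝 (ψ'' t)) := by
  rw [Metric.tendsto_nhdsWithin_nhds]
  intro ε hε
  obtain ⟨δ, hδ, hδε⟩ := Metric.continuousAt_iff.1 hc (ε / 3) (by positivity)
  refine ⟨δ, hδ, fun h hh hhδ => ?_⟩
  rw [Real.dist_eq, sub_zero, abs_of_pos hh] at hhδ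
  have := abs_secondDiffQuot_sub_le hψ hψ' hh (ε := ε / 3) fun v hv =>
    (hδε (by rw [Real.dist_eq, add_sub_cancel_left]; linarith)).le
  rw [Real.dist_eq]
  linarith

end SecondDiff

-- `secondDiffQuot (fun x => cosh (α * x)) 0 h = 2 * (cosh (α * h) - 1) / h ^ 2`, so the integrand
-- is `F t * (φ (t + h) + φ (t - h) - 2 * cosh (α * h) * φ t) / h ^ 2`.
theorem tendsto_integral_mul_secondDiffQuot {F φ : ℝ → ℝ} (hF : Integrable F)
    (hφ : ContDiff ℝ 2 φ) (hφc : HasCompactSupport φ) (α : ℝ) :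
    Tendsto (fun h => ∫ t, F t *
        (secondDiffQuot φ t h - secondDiffQuot (fun x => cosh (α * x)) 0 h * φ t))
      (𝓝[>] 0) (𝓝 (∫ t, F t * (deriv (deriv φ) t - α ^ 2 * φ t))) := by
  have hφ₁ (x : ℝ) : HasDerivAt φ (deriv φ x) x := (hφ.differentiable two_ne_zero x).hasDerivAt
  have hφ₂ (x : ℝ) : HasDerivAt (deriv φ) (deriv (deriv φ) x) x :=
    (hφ.differentiable_deriv_two x).hasDerivAt
  have hφ₂c : Continuous (deriv (deriv φ)) :=
    (contDiff_succ_iff_deriv.1 hφ).2.2.continuous_deriv le_rfl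
  have hlin (x : ℝ) : HasDerivAt (fun x => α * x) α x := by
    simpa using (hasDerivAt_id' x).const_mul α
  have hcosh₁ (x : ℝ) : HasDerivAt (fun x => cosh (α * x)) (α * sinh (α * x)) x := by
    simpa [mul_comm] using (hlin x).cosh
  have hcosh₂ (x : ℝ) : HasDerivAt (fun x => α * sinh (α * x)) (α ^ 2 * cosh (α * x)) x :=
    ((hlin x).sinh.const_mul α).congr_deriv (by ring)
  have hcosh : Tendsto (secondDiffQuot (fun x => cosh (α * x)) 0) (𝓝[>] 0) (𝓝 (α ^ 2)) := by
    simpa using tendsto_secondDiffQuot hcosh₁ hcosh₂ (t := 0)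
      (by fun_prop : Continuous _).continuousAt
  obtain ⟨M₀, hM₀⟩ := hφc.exists_bound_of_continuous hφ.continuous
  obtain ⟨M₂, hM₂⟩ := hφc.deriv.deriv.exists_bound_of_continuous hφ₂c
  simp only [Real.norm_eq_abs] at hM₀ hM₂
  have hφD {t h : ℝ} (hh : 0 < h) : |secondDiffQuot φ t h| ≤ 5 * M₂ := by
    have := abs_secondDiffQuot_sub_le hφ₁ hφ₂ hh (t := t) (ε := 2 * M₂) fun v _ =>
      (abs_sub _ _).trans (by linarith [hM₂ (t + v), hM₂ t])
    linarith [abs_sub_abs_le_abs_sub (secondDiffQuot φ t h) (deriv (deriv φ) t), hM₂ t]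
  have hcoshD : ∀ᶠ h in 𝓝[>] 0, |secondDiffQuot (fun x => cosh (α * x)) 0 h| < |α ^ 2| + 1 :=
    hcosh.abs.eventually (gt_mem_nhds (lt_add_one _))
  have hφcont := hφ.continuous
  refine tendsto_integral_filter_of_dominated_convergence
    (fun t => |F t| * (5 * M₂ + (|α ^ 2| + 1) * M₀)) (Eventually.of_forall fun h =>
      hF.aestronglyMeasurable.mul (Continuous.aestronglyMeasurable
        (by unfold secondDiffQuot; fun_prop)))
    ?_ (hF.abs.mul_const _) (ae_of_all _ fun t => tendsto_const_nhds.mul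
      ((tendsto_secondDiffQuot hφ₁ hφ₂ hφ₂c.continuousAt).sub (hcosh.mul_const _)))
  filter_upwards [hcoshD, self_mem_nhdsWithin] with h hch hh
  refine ae_of_all _ fun t => ?_
  rw [Real.norm_eq_abs, abs_mul]
  refine mul_le_mul_of_nonneg_left ?_ (abs_nonneg _)
  calc _ ≤ |secondDiffQuot φ t h| + |secondDiffQuot (fun x => cosh (α * x)) 0 h| * |φ t| := by
        rw [← abs_mul]; exact abs_sub _ _
    _ ≤ 5 * M₂ + (|α ^ 2| + 1) * M₀ := by
        gcongr
        exacts [hφD hh, hM₀ t]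

theorem integral_mul_second_difference_nonpos {F φ : ℝ → ℝ} (hF : Integrable F) (hφ : Continuous φ)
    {M : ℝ} (hM : ∀ x, ‖φ x‖ ≤ M) (hφ₀ : ∀ x, 0 ≤ φ x) {h c : ℝ}
    (hmid : ∀ t ∈ support φ, F (t - h) + F (t + h) ≤ c * F t) :
    ∫ t, F t * (φ (t + h) + φ (t - h) - c * φ t) ≤ 0 := by
  have hFφ (v : ℝ) : Integrable fun t => F t * φ (t + v) :=
    hF.mul_bdd (hφ.comp (continuous_add_const v)).aestronglyMeasurable
      (ae_of_all _ fun t => hM (t + v))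
  have hshift (v : ℝ) : ∫ t, F t * φ (t + v) = ∫ t, F (t - v) * φ t := by
    simpa using integral_add_right_eq_self (fun t => F (t - v) * φ t) v
  have hGφ {G : ℝ → ℝ} (hG : Integrable G) : Integrable fun t => G t * φ t :=
    hG.mul_bdd hφ.aestronglyMeasurable (ae_of_all _ hM)
  have hsplit : ∫ t, F t * (φ (t + h) + φ (t - h) - c * φ t) =
      (∫ t, F t * φ (t + h)) + (∫ t, F t * φ (t + -h)) - c * ∫ t, F t * φ (t + 0) := by
    have hpt (t : ℝ) : F t * (φ (t + h) + φ (t - h) - c * φ t) =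
        F t * φ (t + h) + F t * φ (t + -h) - c * (F t * φ (t + 0)) := by
      rw [add_zero, ← sub_eq_add_neg]; ring
    simp only [hpt]
    rw [integral_sub, integral_add, integral_const_mul]
    exacts [hFφ h, hFφ (-h), (hFφ h).add (hFφ (-h)), (hFφ 0).const_mul c]
  have hmerge : (∫ t, F (t - h) * φ t) + (∫ t, F (t - -h) * φ t) - c * ∫ t, F (t - 0) * φ t =
      ∫ t, (F (t - h) + F (t + h) - c * F t) * φ t := by
    have hpt (t : ℝ) : (F (t - h) + F (t + h) - c * F t) * φ t =
        F (t - h) * φ t + F (t + h) * φ t - c * (F t * φ t) := by ring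
    simp only [hpt, sub_neg_eq_add, sub_zero]
    rw [integral_sub, integral_add, integral_const_mul]
    exacts [hGφ (hF.comp_sub_right h), hGφ (hF.comp_add_right h),
      (hGφ (hF.comp_sub_right h)).add (hGφ (hF.comp_add_right h)), (hGφ hF).const_mul c]
  rw [hsplit, hshift, hshift, hshift, hmerge]
  refine integral_nonpos fun t => ?_
  by_cases ht : t ∈ support φ
  · exact mul_nonpos_of_nonpos_of_nonneg (by linarith [hmid t ht]) (hφ₀ t)
  · simp [notMem_support.1 ht]

theorem isWeakSupersolution_of_add_le_two_cosh_mul {K a b : ℝ} (hK : K ≤ 0) {f : ℝ → ℝ}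
    (hf : IntegrableOn f (Ioo a b))
    (hmid : ∀ x h, 0 < h → a < x - h → x + h < b →
      f (x - h) + f (x + h) ≤ 2 * cosh (√(-K) * h) * f x) :
    IsWeakSupersolution K f a b := by
  intro φ hφ hφc hφs hφ₀
  set F := (Ioo a b).indicator f
  have hF : Integrable F := hf.integrable_indicator measurableSet_Ioo
  obtain ⟨δ, hδ, hδs⟩ := hφc.exists_thickening_subset_open isOpen_Ioo hφs
  obtain ⟨M, hM⟩ := hφc.exists_bound_of_continuous hφ.continuous
  have hlim := tendsto_integral_mul_secondDiffQuot hF (hφ.of_le (by norm_cast)) hφc (√(-K))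
  have hnonpos : ∀ᶠ h in 𝓝[>] 0, ∫ t, F t * (secondDiffQuot φ t h -
      secondDiffQuot (fun x => cosh (√(-K) * x)) 0 h * φ t) ≤ 0 := by
    filter_upwards [Ioo_mem_nhdsGT hδ] with h hh
    have hpt (t : ℝ) : F t * (secondDiffQuot φ t h -
        secondDiffQuot (fun x => cosh (√(-K) * x)) 0 h * φ t) =
        F t * (φ (t + h) + φ (t - h) - 2 * cosh (√(-K) * h) * φ t) / h ^ 2 := by
      simp only [secondDiffQuot, zero_add, zero_sub, mul_neg, cosh_neg, mul_zero, cosh_zero]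
      field_simp
      ring
    simp_rw [hpt]
    rw [integral_div]
    refine div_nonpos_of_nonpos_of_nonneg
      (integral_mul_second_difference_nonpos hF hφ.continuous hM hφ₀ fun t ht => ?_) (sq_nonneg h)
    have hmem (v : ℝ) (hv : |v| ≤ h) : t + v ∈ Ioo a b :=
      hδs (Metric.mem_thickening_iff.2 ⟨t, subset_tsupport _ ht, by
        rw [Real.dist_eq, add_sub_cancel_left]; linarith [hh.2]⟩)
    have hright := hmem h (by rw [abs_of_pos hh.1])
    have hleft := hmem (-h) (by rw [abs_neg, abs_of_pos hh.1])
    rw [← sub_eq_add_neg] at hleft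
    simp only [F, indicator_of_mem hright, indicator_of_mem hleft,
      indicator_of_mem (show t ∈ Ioo a b by simpa using hmem 0 (by simp [hh.1.le]))]
    exact hmid t h hh.1 hleft.1 hright.2
  have := le_of_tendsto hlim hnonpos
  rw [integral_indicator_mul measurableSet_Ioo, sq_sqrt (neg_nonneg.2 hK)] at this
  simpa only [neg_mul, sub_neg_eq_add] using this

theorem SigmaConcaveOn.isWeakSupersolution {K a b : ℝ} (hK : K < 0) {f : ℝ → ℝ}
    (hσ : SigmaConcaveOn K f (Icc a b)) (hf : IntegrableOn f (Ioo a b)) :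
    IsWeakSupersolution K f a b := by
  refine isWeakSupersolution_of_add_le_two_cosh_mul hK.le hf fun x h hh hxa hxb => ?_
  have := sigmaConcaveOn_iff.1 hσ (x - h) ⟨hxa.le, by linarith⟩ (x + h) ⟨by linarith, hxb.le⟩
    (by linarith) x ⟨by linarith, by linarith⟩
  rwa [sinhInterp_midpoint x h (mul_pos (sqrt_pos.2 (neg_pos.2 hK)) hh).ne',
    div_le_iff₀ (by positivity), mul_comm (f x)] at this

theorem statement_8_general (K a b : ℝ) (hK : K < 0)
    (f : ℝ → ℝ) (hf : ∃ C : NNReal, LipschitzOnWith C f (Set.Icc a b)) :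
    (∀ φ : ℝ → ℝ, ContDiff ℝ (⊤ : ℕ∞) φ → HasCompactSupport φ →
        tsupport φ ⊆ Set.Ioo a b → (∀ t, 0 ≤ φ t) →
        ∫ t in Set.Ioo a b, f t * (deriv (deriv φ) t + K * φ t) ≤ 0)
      ↔
    (∀ t₀ ∈ Set.Icc a b, ∀ t₁ ∈ Set.Icc a b, t₀ ≠ t₁ → ∀ s ∈ Set.Icc (0 : ℝ) 1,
        Real.sinh ((1 - s) * (Real.sqrt (-K) * |t₁ - t₀|))
            / Real.sinh (Real.sqrt (-K) * |t₁ - t₀|) * f t₀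
          + Real.sinh (s * (Real.sqrt (-K) * |t₁ - t₀|))
            / Real.sinh (Real.sqrt (-K) * |t₁ - t₀|) * f t₁
          ≤ f ((1 - s) * t₀ + s * t₁)) := by
  obtain ⟨C, hC⟩ := hf
  exact ⟨fun h => IsWeakSupersolution.sigmaConcaveOn hK h hC.continuousOn,
    fun h => SigmaConcaveOn.isWeakSupersolution hK h
      (hC.continuousOn.integrableOn_Icc.mono_set Ioo_subset_Icc_self)⟩

/-- For `K < 0`, a nonnegative Lipschitz function `f` on `[a,b]` satisfies
`f'' + K f ≤ 0` in the distributional sense on `(a,b)` if and only if it satisfies the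
`σ`-concavity inequality with coefficients `σ_K^{(s)}(θ) = sinh(s √(-K) θ)/sinh(√(-K) θ)`. -/
theorem statement_8 (K a b : ℝ) (hK : K < 0) (hab : a < b)
    (f : ℝ → ℝ) (hf : ∃ C : NNReal, LipschitzOnWith C f (Set.Icc a b))
    (hnonneg : ∀ t ∈ Set.Icc a b, 0 ≤ f t) :
    (∀ φ : ℝ → ℝ, ContDiff ℝ (⊤ : ℕ∞) φ → HasCompactSupport φ →
        tsupport φ ⊆ Set.Ioo a b → (∀ t, 0 ≤ φ t) →
        ∫ t in Set.Ioo a b, f t * (deriv (deriv φ) t + K * φ t) ≤ 0)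
      ↔
    (∀ t₀ ∈ Set.Icc a b, ∀ t₁ ∈ Set.Icc a b, t₀ ≠ t₁ → ∀ s ∈ Set.Icc (0 : ℝ) 1,
        Real.sinh ((1 - s) * (Real.sqrt (-K) * |t₁ - t₀|))
            / Real.sinh (Real.sqrt (-K) * |t₁ - t₀|) * f t₀
          + Real.sinh (s * (Real.sqrt (-K) * |t₁ - t₀|))
            / Real.sinh (Real.sqrt (-K) * |t₁ - t₀|) * f t₁
          ≤ f ((1 - s) * t₀ + s * t₁)) :=
  statement_8_general K a b hK f hf
end
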